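/- Let Γ be a countable group with a totally ergodic, non-trivial measure-preserving action on (X,μ). Then for μ-almost every x ∈ X, the stabilizer Γ_x is a locally finite group. -/

import Mathlib

/-!
If a finite set `F ⊆ Γ` generates an infinite subgroup `N`, the set of points fixed by `F` is
`N`-invariant, and so is its intersection with any measurable set. Ergodicity of `N` then gives
measure `0` or `1` to all these sets; if the fixed set had measure `1`, every measurable set would
have measure `0` or `1`, making `μ` a Dirac mass on the standard Borel space `X`. So the fixed set
of `F` is null, and a countable union over the finite subsets of `Γ` finishes the proof.
-/

open MeasureTheory

/-- A subgroup `N` of `Γ` acts ergodically on `(X, μ)`. -/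
def ErgodicSubgroup {Γ X : Type*} [Group Γ] [MulAction Γ X] [MeasurableSpace X]
    (μ : Measure X) (N : Subgroup Γ) : Prop :=
  ∀ A : Set X, MeasurableSet A → (∀ γ ∈ N, (fun x => γ • x) ⁻¹' A = A) →
    μ A = 0 ∨ μ A = 1

/-- The action of `Γ` on `(X, μ)` is totally ergodic: every infinite subgroup
acts ergodically. -/
def TotallyErgodic {Γ X : Type*} [Group Γ] [MulAction Γ X] [MeasurableSpace X]
    (μ : Measure X) : Prop :=
  ∀ N : Subgroup Γ, (N : Set Γ).Infinite → ErgodicSubgroup μ N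

lemma preimage_smul_inter_eq_of_forall_smul_eq {Γ X : Type*} [Group Γ] [MulAction Γ X]
    {N : Subgroup Γ} {S : Set X} (hS : ∀ γ ∈ N, ∀ x ∈ S, γ • x = x) (A : Set X)
    {γ : Γ} (hγ : γ ∈ N) :
    (fun x => γ • x) ⁻¹' (A ∩ S) = A ∩ S := by
  ext x
  constructor
  · rintro ⟨hA, hxS⟩
    have hx : x = γ • x := by
      simpa using hS γ⁻¹ (N.inv_mem hγ) _ hxS
    rw [hx]
    exact ⟨hA, hxS⟩
  · rintro ⟨hA, hxS⟩
    simp only [Set.mem_preimage, hS γ hγ x hxS]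
    exact ⟨hA, hxS⟩

lemma ErgodicSubgroup.measure_eq_zero_of_forall_smul_eq {Γ X : Type*} [Group Γ] [MulAction Γ X]
    [MeasurableSpace X] [StandardBorelSpace X] {μ : Measure X} [IsProbabilityMeasure μ]
    (hμ : ∀ x : X, μ ≠ Measure.dirac x) {N : Subgroup Γ} (hN : ErgodicSubgroup μ N)
    {S : Set X} (hSm : MeasurableSet S) (hS : ∀ γ ∈ N, ∀ x ∈ S, γ • x = x) :
    μ S = 0 := by
  have hinv := preimage_smul_inter_eq_of_forall_smul_eq hS
  refine (hN S hSm fun γ hγ => by simpa using hinv Set.univ hγ).resolve_right fun hS1 => ?_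
  have hSc : μ Sᶜ = 0 := (prob_compl_eq_zero_iff hSm).2 hS1
  have : IsZeroOneMeasure μ := ⟨fun A hA => by
    simpa only [measure_inter_conull hSc] using
      hN (A ∩ S) (hA.inter hSm) fun γ hγ => hinv A hγ⟩
  obtain ⟨x, hx⟩ := IsZeroOneMeasure.exists_eq_dirac (μ := μ)
  exact hμ x hx

theorem stmt_4_general {Γ X : Type*} [Group Γ] [Countable Γ]
    [MeasurableSpace X] [StandardBorelSpace X] [MulAction Γ X]
    (μ : Measure X) [IsProbabilityMeasure μ]
    (hte : TotallyErgodic (Γ := Γ) μ)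
    (hnontriv : ∀ x : X, μ ≠ Measure.dirac x)
    (hmeas : ∀ F : Finset Γ, MeasurableSet {x : X | ∀ γ ∈ F, γ • x = x}) :
    ∀ᵐ x ∂μ, ∀ F : Finset Γ, (∀ γ ∈ F, γ ∈ MulAction.stabilizer Γ x) →
      ((Subgroup.closure (F : Set Γ) : Subgroup Γ) : Set Γ).Finite := by
  refine ae_all_iff.2 fun F => ?_
  by_cases hfin : ((Subgroup.closure (F : Set Γ) : Subgroup Γ) : Set Γ).Finite
  · exact Filter.Eventually.of_forall fun _ _ => hfin
  have hfix_null : μ {x : X | ∀ γ ∈ F, γ • x = x} = 0 :=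
    (hte _ hfin).measure_eq_zero_of_forall_smul_eq hnontriv (hmeas F)
      fun γ hγ x hx => (Subgroup.closure_le (K := MulAction.stabilizer Γ x)).2 hx hγ
  filter_upwards [measure_eq_zero_iff_ae_notMem.1 hfix_null] with x hx hF
  exact absurd hF hx

/-- For a non-trivial totally ergodic action, the stabilizer of almost every point is a
locally finite group: every finite subset of the stabilizer generates a finite subgroup. -/
theorem stmt_4 {Γ X : Type*} [Group Γ] [Countable Γ]
    [MeasurableSpace X] [StandardBorelSpace X] [MulAction Γ X]
    (μ : Measure X) [IsProbabilityMeasure μ]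
    (hmp : ∀ γ : Γ, MeasurePreserving (fun x => γ • x) μ μ)
    (hte : TotallyErgodic (Γ := Γ) μ)
    (hnontriv : ∀ x : X, μ ≠ Measure.dirac x)
    (hmeas : ∀ F : Finset Γ, MeasurableSet {x : X | ∀ γ ∈ F, γ • x = x}) :
    ∀ᵐ x ∂μ, ∀ F : Finset Γ, (∀ γ ∈ F, γ ∈ MulAction.stabilizer Γ x) →
      ((Subgroup.closure (F : Set Γ) : Subgroup Γ) : Set Γ).Finite :=
  stmt_4_general μ hte hnontriv hmeas
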